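/- arXiv:2304.02442 — 4 statements merged into one kernel-verified Lean document; each statement's English description precedes it below -/
import Mathlib

section
/- Let κ ∈ (0,1], p ∈ [1,∞] and q with 1/p + 1/q = 1, and let Ψ_p : ℝ^d → ℝ be a differentiable prox-function that is (1, (1+κ)/κ)-uniformly convex with respect to the ℓ_p-norm. Let X ⊂ ℝ^d be a compact convex set, x₀ = argmin_{x ∈ X} Ψ_p(x), ν > 0 a stepsize, and g₁, …, g_T ∈ ℝ^d arbitrary vectors. Define iterates for k = 0, …, T−1 by: y_{k+1} satisfies ∇Ψ_p(y_{k+1}) = ∇Ψ_p(x_k) − ν g_{k+1}, and x_{k+1} = argmin_{x ∈ X} D_{Ψ_p}(x, y_{k+1}). Then for any x* ∈ X, setting R₀^{(1+κ)/κ} = ((1+κ)/κ) D_{Ψ_p}(x*, x₀), the following holds: (1/T) Σ_{k=0}^{T−1} ⟨g_{k+1}, x_k − x*⟩ ≤ (κ/(1+κ)) · R₀^{(1+κ)/κ}/(νT) + (ν^κ/(1+κ)) · (1/T) Σ_{k=0}^{T−1} ‖g_{k+1}‖_q^{1+κ}. -/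
open MeasureTheory
open scoped ENNReal

noncomputable section

/-- The ℓ_p-norm on `ℝ^d` for an extended-real exponent `p ∈ [1, ∞]`. -/
def lpNormE {d : ℕ} (p : ℝ≥0∞) [Fact (1 ≤ p)] (x : Fin d → ℝ) : ℝ :=
  ‖(WithLp.equiv p (Fin d → ℝ)).symm x‖

lemma lpNormE_nonneg {d : ℕ} (p : ℝ≥0∞) [Fact (1 ≤ p)] (u : Fin d → ℝ) :
    0 ≤ lpNormE p u := norm_nonneg _

lemma lpNormE_eq_sum {d : ℕ} {p : ℝ≥0∞} [Fact (1 ≤ p)] (hp : p ≠ ∞) (u : Fin d → ℝ) :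
    lpNormE p u = (∑ i, |u i| ^ p.toReal) ^ (1 / p.toReal) := by
  have hp0 : p ≠ 0 := (lt_of_lt_of_le zero_lt_one (Fact.out : 1 ≤ p)).ne'
  have h0 : 0 < p.toReal := ENNReal.toReal_pos hp0 hp
  rw [lpNormE, PiLp.norm_eq_sum h0]
  simp [WithLp.equiv_symm_apply, PiLp.toLp_apply, Real.norm_eq_abs]

lemma lpNormE_top {d : ℕ} {p : ℝ≥0∞} [Fact (1 ≤ p)] (hp : p = ∞) (u : Fin d → ℝ) :
    lpNormE p u = ⨆ i, |u i| := by
  subst hp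
  rw [lpNormE, PiLp.norm_eq_ciSup]
  simp [WithLp.equiv_symm_apply, PiLp.toLp_apply, Real.norm_eq_abs]

lemma holder_one_top {d : ℕ} (u v : Fin d → ℝ) :
    ∑ i, u i * v i ≤ (∑ i, |u i|) * ⨆ i, |v i| := by
  have hsup : ∀ i, |v i| ≤ ⨆ j, |v j| :=
    fun i => le_ciSup (f := fun j => |v j|) (Set.Finite.bddAbove (Set.finite_range _)) i
  calc ∑ i, u i * v i ≤ ∑ i, |u i| * |v i| := by
        refine Finset.sum_le_sum fun i _ => ?_
        rw [← abs_mul]; exact le_abs_self _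
    _ ≤ ∑ i, |u i| * ⨆ j, |v j| :=
        Finset.sum_le_sum fun i _ => mul_le_mul_of_nonneg_left (hsup i) (abs_nonneg _)
    _ = (∑ i, |u i|) * ⨆ j, |v j| := by rw [Finset.sum_mul]

lemma holder_pi {d : ℕ} (p q : ℝ≥0∞) [Fact (1 ≤ p)] [Fact (1 ≤ q)]
    (hpq : 1/p + 1/q = 1) (u v : Fin d → ℝ) :
    ∑ i, u i * v i ≤ lpNormE p u * lpNormE q v := by
  rcases eq_or_ne q ∞ with hq | hq
  · have hp1 : p = 1 := by
      rw [hq] at hpq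
      simp only [one_div, ENNReal.inv_top, add_zero, ENNReal.inv_eq_one] at hpq
      exact hpq
    rw [lpNormE_eq_sum (by rw [hp1]; exact ENNReal.one_ne_top) u, lpNormE_top hq v, hp1]
    simpa using holder_one_top u v
  rcases eq_or_ne p ∞ with hp | hp
  · have hq1 : q = 1 := by
      rw [hp] at hpq
      simp only [one_div, ENNReal.inv_top, zero_add, ENNReal.inv_eq_one] at hpq
      exact hpq
    rw [lpNormE_top hp u, lpNormE_eq_sum (by rw [hq1]; exact ENNReal.one_ne_top) v, hq1]
    calc ∑ i, u i * v i = ∑ i, v i * u i := by simp [mul_comm]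
      _ ≤ (∑ i, |v i|) * ⨆ i, |u i| := holder_one_top v u
      _ = (⨆ i, |u i|) * (∑ i, |v i| ^ (1:ℝ≥0∞).toReal) ^ (1 / (1:ℝ≥0∞).toReal) := by
          simp [mul_comm]
  · have hp0 : p ≠ 0 := (lt_of_lt_of_le zero_lt_one (Fact.out : 1 ≤ p)).ne'
    have hq0 : q ≠ 0 := (lt_of_lt_of_le zero_lt_one (Fact.out : 1 ≤ q)).ne'
    have hfin : p.toReal⁻¹ + q.toReal⁻¹ = 1 := by
      rw [one_div, one_div] at hpq
      have h := congrArg ENNReal.toReal hpq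
      rwa [ENNReal.toReal_add (by simp [hp0]) (by simp [hq0]),
        ENNReal.toReal_inv, ENNReal.toReal_inv, ENNReal.toReal_one] at h
    have hppos : 0 < p.toReal := ENNReal.toReal_pos hp0 hp
    have hqpos : 0 < q.toReal := ENNReal.toReal_pos hq0 hq
    have hplt : 1 < p.toReal := by
      have h1 : 0 < q.toReal⁻¹ := by positivity
      have h2 : p.toReal⁻¹ < 1 := by linarith
      nlinarith [mul_inv_cancel₀ hppos.ne']
    have hconj : p.toReal.HolderConjugate q.toReal := Real.holderConjugate_iff.mpr ⟨hplt, hfin⟩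
    rw [lpNormE_eq_sum hp, lpNormE_eq_sum hq]
    exact Real.inner_le_Lp_mul_Lq Finset.univ u v hconj

lemma deriv_nonneg_of_right_min {φ : ℝ → ℝ} {a : ℝ} (hφ : HasDerivAt φ a 0)
    (h : ∀ t ∈ Set.Ioc (0:ℝ) 1, φ 0 ≤ φ t) : 0 ≤ a := by
  have h1 : Filter.Tendsto (slope φ 0) (nhdsWithin 0 (Set.Ioi 0)) (nhds a) :=
    (hasDerivAt_iff_tendsto_slope.mp hφ).mono_left
      (nhdsWithin_mono 0 fun t ht => Set.mem_compl_singleton_iff.mpr (ne_of_gt ht))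
  refine ge_of_tendsto h1 ?_
  filter_upwards [Ioc_mem_nhdsGT_of_mem (Set.left_mem_Ico.mpr one_pos)] with t ht
  rw [slope_def_field]
  have h2 := h t ht
  have h3 := ht.1
  apply div_nonneg <;> linarith

lemma fderiv_nonneg_of_isMinOn {d : ℕ} {f : (Fin d → ℝ) → ℝ} (hf : Differentiable ℝ f)
    {X : Set (Fin d → ℝ)} (hX : Convex ℝ X) {m z : Fin d → ℝ} (hm : m ∈ X) (hz : z ∈ X)
    (hmin : ∀ w ∈ X, f m ≤ f w) : 0 ≤ fderiv ℝ f m (z - m) := by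
  have hline : HasDerivAt (fun t : ℝ => m + t • (z - m)) (z - m) 0 := by
    simpa using ((hasDerivAt_id (0:ℝ)).smul_const (z - m)).const_add m
  have h0 : m + (0:ℝ) • (z - m) = m := by simp
  have hφ : HasDerivAt (fun t : ℝ => f (m + t • (z - m))) (fderiv ℝ f m (z - m)) 0 := by
    have h := (hf (m + (0:ℝ) • (z - m))).hasFDerivAt.comp_hasDerivAt 0 hline
    rw [h0] at h
    exact h
  refine deriv_nonneg_of_right_min hφ fun t ht => ?_
  have hmem : m + t • (z - m) ∈ X := hX.add_smul_sub_mem hm hz ⟨ht.1.le, ht.2⟩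
  simpa [h0] using hmin _ hmem

theorem statement4 {d : ℕ} (κ : ℝ) (hκ : κ ∈ Set.Ioc (0 : ℝ) 1)
    (p q : ℝ≥0∞) [Fact (1 ≤ p)] [Fact (1 ≤ q)] (hpq : 1/p + 1/q = 1)
    -- Ψ_p is a differentiable prox-function, (1, (1+κ)/κ)-uniformly convex w.r.t. ℓ_p
    (Ψ : (Fin d → ℝ) → ℝ) (hΨdiff : Differentiable ℝ Ψ)
    (hΨconv : ConvexOn ℝ Set.univ Ψ)
    (hΨuc : ∀ x y : Fin d → ℝ,
      (κ/(1+κ)) * lpNormE p (x - y) ^ ((1+κ)/κ) ≤ Ψ y - Ψ x - fderiv ℝ Ψ x (y - x))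
    (X : Set (Fin d → ℝ)) (hXcompact : IsCompact X) (hXconvex : Convex ℝ X)
    (T : ℕ) (hT : 0 < T) (ν : ℝ) (hν : 0 < ν)
    (g x y : ℕ → Fin d → ℝ)
    -- x₀ = argmin_{x ∈ X} Ψ_p(x)
    (hx0 : x 0 ∈ X ∧ ∀ z ∈ X, Ψ (x 0) ≤ Ψ z)
    -- Bregman divergence of Ψ
    (D : (Fin d → ℝ) → (Fin d → ℝ) → ℝ)
    (hD : ∀ a b, D a b = Ψ a - Ψ b - fderiv ℝ Ψ b (a - b))
    -- mirror step: ∇Ψ(y_{k+1}) = ∇Ψ(x_k) − ν g_{k+1}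
    (hmirror : ∀ k < T, ∀ v : Fin d → ℝ,
      fderiv ℝ Ψ (y (k+1)) v = fderiv ℝ Ψ (x k) v - ν * ∑ i, g (k+1) i * v i)
    -- Bregman projection: x_{k+1} = argmin_{z ∈ X} D(z, y_{k+1})
    (hproj : ∀ k < T, x (k+1) ∈ X ∧ ∀ z ∈ X, D (x (k+1)) (y (k+1)) ≤ D z (y (k+1)))
    (xstar : Fin d → ℝ) (hxstar : xstar ∈ X)
    (R₀ : ℝ) (hR₀ : R₀ = (((1+κ)/κ) * D xstar (x 0)) ^ (κ/(1+κ))) :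
    (1/(T : ℝ)) * ∑ k ∈ Finset.range T, ∑ i, g (k+1) i * (x k i - xstar i) ≤
      (κ/(1+κ)) * R₀ ^ ((1+κ)/κ) / (ν * T) +
        (ν ^ κ/(1+κ)) * ((1/(T : ℝ)) * ∑ k ∈ Finset.range T, lpNormE q (g (k+1)) ^ (1+κ)) := by
  obtain ⟨hκ0, hκ1⟩ := hκ
  have h1κ : (0:ℝ) < 1 + κ := by linarith
  have hconj : (1+κ).HolderConjugate ((1+κ)/κ) := by
    rw [Real.holderConjugate_iff]
    constructor
    · linarith
    · rw [inv_div]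
      field_simp
  -- nonnegativity of the Bregman divergence
  have hDnn : ∀ a b, 0 ≤ D a b := by
    intro a b
    have h := hΨuc b a
    have h2 : 0 ≤ (κ/(1+κ)) * lpNormE p (b - a) ^ ((1+κ)/κ) :=
      mul_nonneg (by positivity) (Real.rpow_nonneg (lpNormE_nonneg _ _) _)
    rw [hD]; linarith
  -- three-point identity
  have tp : ∀ a b c, D a b + D b c - D a c =
      fderiv ℝ Ψ c (a - b) - fderiv ℝ Ψ b (a - b) := by
    intro a b c
    simp only [hD, map_sub]
    ring
  -- per-step inequality
  have step : ∀ k < T, ν * (∑ i, g (k+1) i * (x k i - xstar i)) ≤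
      D xstar (x k) - D xstar (x (k+1)) +
        ν ^ (1+κ) * lpNormE q (g (k+1)) ^ (1+κ) / (1+κ) := by
    intro k hk
    have hA : ν * (∑ i, g (k+1) i * (x k i - xstar i)) =
        D xstar (x k) - D xstar (y (k+1)) + D (x k) (y (k+1)) := by
      have h1 := tp xstar (x k) (y (k+1))
      have hm := hmirror k hk (xstar - x k)
      have hsum : ∑ i, g (k+1) i * (xstar - x k) i =
          -∑ i, g (k+1) i * (x k i - xstar i) := by
        simp only [Pi.sub_apply, mul_sub, Finset.sum_sub_distrib]
        ring
      rw [hsum] at hm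
      linarith
    have hB : D xstar (x (k+1)) ≤ D xstar (y (k+1)) := by
      have hfdiff : Differentiable ℝ (fun z => Ψ z - fderiv ℝ Ψ (y (k+1)) z) :=
        hΨdiff.sub (fderiv ℝ Ψ (y (k+1))).differentiable
      have hmin : ∀ w ∈ X, (fun z => Ψ z - fderiv ℝ Ψ (y (k+1)) z) (x (k+1)) ≤
          (fun z => Ψ z - fderiv ℝ Ψ (y (k+1)) z) w := by
        intro w hw
        have h1 := (hproj k hk).2 w hw
        rw [hD, hD] at h1
        simp only [map_sub] at h1
        simp only []
        linarith
      have h0 := fderiv_nonneg_of_isMinOn hfdiff hXconvex (hproj k hk).1 hxstar hmin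
      have hfd : fderiv ℝ (fun z => Ψ z - fderiv ℝ Ψ (y (k+1)) z) (x (k+1)) =
          fderiv ℝ Ψ (x (k+1)) - fderiv ℝ Ψ (y (k+1)) :=
        ((hΨdiff (x (k+1))).hasFDerivAt.sub
          (fderiv ℝ Ψ (y (k+1))).hasFDerivAt).fderiv
      rw [hfd, ContinuousLinearMap.sub_apply] at h0
      have h2 := tp xstar (x (k+1)) (y (k+1))
      have h3 := hDnn (x (k+1)) (y (k+1))
      linarith
    have hC : D (x k) (y (k+1)) ≤ ν ^ (1+κ) * lpNormE q (g (k+1)) ^ (1+κ) / (1+κ) := by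
      have hself : D (x k) (x k) = 0 := by rw [hD]; simp
      have h1 := tp (x k) (y (k+1)) (x k)
      have hm := hmirror k hk (x k - y (k+1))
      have hucD : (κ/(1+κ)) * lpNormE p (x k - y (k+1)) ^ ((1+κ)/κ) ≤ D (y (k+1)) (x k) := by
        rw [hD]; exact hΨuc (x k) (y (k+1))
      have hhold : ∑ i, g (k+1) i * (x k - y (k+1)) i ≤
          lpNormE q (g (k+1)) * lpNormE p (x k - y (k+1)) :=
        holder_pi q p (by rw [add_comm]; exact hpq) (g (k+1)) (x k - y (k+1))
      have hholdν : ν * ∑ i, g (k+1) i * (x k - y (k+1)) i ≤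
          ν * (lpNormE q (g (k+1)) * lpNormE p (x k - y (k+1))) :=
        mul_le_mul_of_nonneg_left hhold hν.le
      have hy := Real.young_inequality_of_nonneg
        (mul_nonneg hν.le (lpNormE_nonneg q (g (k+1)))) (lpNormE_nonneg p (x k - y (k+1))) hconj
      have e1 : (ν * lpNormE q (g (k+1))) ^ (1+κ) =
          ν ^ (1+κ) * lpNormE q (g (k+1)) ^ (1+κ) :=
        Real.mul_rpow hν.le (lpNormE_nonneg q (g (k+1)))
      have e2 : lpNormE p (x k - y (k+1)) ^ ((1+κ)/κ) / ((1+κ)/κ) =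
          (κ/(1+κ)) * lpNormE p (x k - y (k+1)) ^ ((1+κ)/κ) := by
        rw [div_eq_mul_inv, inv_div, mul_comm]
      rw [e1, e2, mul_assoc] at hy
      linarith
    linarith
  -- summation and telescoping
  have hsumstep : ν * (∑ k ∈ Finset.range T, ∑ i, g (k+1) i * (x k i - xstar i)) ≤
      D xstar (x 0) +
        ∑ k ∈ Finset.range T, ν ^ (1+κ) * lpNormE q (g (k+1)) ^ (1+κ) / (1+κ) := by
    rw [Finset.mul_sum]
    calc ∑ k ∈ Finset.range T, ν * ∑ i, g (k+1) i * (x k i - xstar i)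
        ≤ ∑ k ∈ Finset.range T, (D xstar (x k) - D xstar (x (k+1)) +
            ν ^ (1+κ) * lpNormE q (g (k+1)) ^ (1+κ) / (1+κ)) :=
          Finset.sum_le_sum fun k hk => step k (Finset.mem_range.mp hk)
      _ = (D xstar (x 0) - D xstar (x T)) +
            ∑ k ∈ Finset.range T, ν ^ (1+κ) * lpNormE q (g (k+1)) ^ (1+κ) / (1+κ) := by
          rw [Finset.sum_add_distrib, Finset.sum_range_sub' (fun k => D xstar (x k))]
      _ ≤ _ := by
          have := hDnn xstar (x T)
          linarith
  -- identify the radius term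
  have hmul1 : (κ/(1+κ)) * ((1+κ)/κ) = 1 := by field_simp
  have hbase : 0 ≤ ((1+κ)/κ) * D xstar (x 0) := mul_nonneg (by positivity) (hDnn _ _)
  have hR : (κ/(1+κ)) * R₀ ^ ((1+κ)/κ) = D xstar (x 0) := by
    rw [hR₀, ← Real.rpow_mul hbase, hmul1, Real.rpow_one, ← mul_assoc, hmul1, one_mul]
  have hT' : (0:ℝ) < T := by exact_mod_cast hT
  set S := ∑ k ∈ Finset.range T, ∑ i, g (k+1) i * (x k i - xstar i) with hS
  set G := ∑ k ∈ Finset.range T, lpNormE q (g (k+1)) ^ (1+κ) with hGdef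
  have hG : ∑ k ∈ Finset.range T, ν ^ (1+κ) * lpNormE q (g (k+1)) ^ (1+κ) / (1+κ)
      = ν ^ (1+κ) / (1+κ) * G := by
    rw [hGdef, Finset.mul_sum]
    exact Finset.sum_congr rfl fun k _ => by ring
  rw [hG] at hsumstep
  have hsplit : ν ^ ((1:ℝ)+κ) = ν ^ κ * ν := by
    rw [add_comm, Real.rpow_add hν, Real.rpow_one]
  rw [hsplit] at hsumstep
  rw [hR]
  have key : S ≤ D xstar (x 0) / ν + ν ^ κ / (1+κ) * G := by
    have h2 : ν * S ≤ ν * (D xstar (x 0) / ν + ν ^ κ / (1+κ) * G) := by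
      have he : ν * (D xstar (x 0) / ν + ν ^ κ / (1+κ) * G)
          = D xstar (x 0) + ν ^ κ * ν / (1+κ) * G := by
        field_simp
      rw [he]
      exact hsumstep
    exact le_of_mul_le_mul_left h2 hν
  calc (1/(T:ℝ)) * S ≤ (1/(T:ℝ)) * (D xstar (x 0) / ν + ν ^ κ / (1+κ) * G) :=
        mul_le_mul_of_nonneg_left key (by positivity)
    _ = D xstar (x 0) / (ν * T) + ν ^ κ/(1+κ) * ((1/(T:ℝ)) * G) := by
        field_simp
end
end

section
/- Let g be a random vector in ℝ^d, c > 0, q ∈ [1,∞], κ ∈ (0,1], and let ĝ = (min(‖g‖_q, c)/‖g‖_q)·g when g ≠ 0 and ĝ = 0 when g = 0. If E[‖g‖_q^{1+κ}] ≤ σ^{1+κ} for some σ > 0, then E[‖ĝ‖_q²] ≤ σ^{1+κ} c^{1−κ}. -/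
open MeasureTheory
open scoped ENNReal ProbabilityTheory

noncomputable section
open Classical in

theorem statement9 {d : ℕ} (q : ℝ≥0∞) [Fact (1 ≤ q)]
    {Ω : Type*} [MeasureSpace Ω] [IsProbabilityMeasure (ℙ : Measure Ω)]
    (c : ℝ) (hc : 0 < c) (κ : ℝ) (hκ : κ ∈ Set.Ioc (0 : ℝ) 1)
    (σ : ℝ) (hσ : 0 < σ)
    (g : Ω → PiLp q (fun _ : Fin d => ℝ))
    (hgmeas : AEStronglyMeasurable g ℙ)
    (hmomInt : Integrable (fun ω => ‖g ω‖ ^ (1 + κ)))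
    (hmom : ∫ ω, ‖g ω‖ ^ (1 + κ) ≤ σ ^ (1 + κ))
    (ghat : Ω → PiLp q (fun _ : Fin d => ℝ))
    (hghat : ∀ ω, ghat ω = if g ω = 0 then 0 else (min ‖g ω‖ c / ‖g ω‖) • g ω) :
    ∫ ω, ‖ghat ω‖ ^ 2 ≤ σ ^ (1 + κ) * c ^ (1 - κ) := by
  obtain ⟨hκ0, hκ1⟩ := hκ
  have hc1κ : (0:ℝ) ≤ c ^ (1 - κ) := Real.rpow_nonneg hc.le _
  have key : ∀ ω, ‖ghat ω‖ ^ 2 ≤ ‖g ω‖ ^ (1 + κ) * c ^ (1 - κ) := by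
    intro ω
    rw [hghat ω]
    by_cases h : g ω = 0
    · simp [h]
      positivity
    · have hg : (0:ℝ) < ‖g ω‖ := norm_pos_iff.mpr h
      have hm : (0:ℝ) < min ‖g ω‖ c := lt_min hg hc
      have hnorm : ‖(min ‖g ω‖ c / ‖g ω‖) • g ω‖ = min ‖g ω‖ c := by
        rw [norm_smul, Real.norm_eq_abs, abs_of_pos (by positivity),
          div_mul_cancel₀ _ hg.ne']
      simp only [if_neg h, hnorm]
      have h2 : (min ‖g ω‖ c) ^ 2 = (min ‖g ω‖ c) ^ (1 + κ) * (min ‖g ω‖ c) ^ (1 - κ) := by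
        rw [← Real.rpow_natCast (min ‖g ω‖ c) 2, ← Real.rpow_add hm]
        norm_num
      rw [h2]
      exact mul_le_mul (Real.rpow_le_rpow hm.le (min_le_left _ _) (by linarith))
        (Real.rpow_le_rpow hm.le (min_le_right _ _) (by linarith))
        (Real.rpow_nonneg hm.le _) (Real.rpow_nonneg hg.le _)
  calc ∫ ω, ‖ghat ω‖ ^ 2
      ≤ ∫ ω, ‖g ω‖ ^ (1 + κ) * c ^ (1 - κ) :=
        integral_mono_of_nonneg (Filter.Eventually.of_forall fun ω => by positivity)
          (hmomInt.mul_const _) (Filter.Eventually.of_forall key)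
    _ = (∫ ω, ‖g ω‖ ^ (1 + κ)) * c ^ (1 - κ) := integral_mul_const _ _
    _ ≤ σ ^ (1 + κ) * c ^ (1 - κ) := mul_le_mul_of_nonneg_right hmom hc1κ
end
end

section
/- Let g be a random vector in ℝ^d, c > 0, q ∈ [1,∞], κ ∈ (0,1], and let ĝ = (min(‖g‖_q, c)/‖g‖_q)·g when g ≠ 0 and ĝ = 0 when g = 0. If E[‖g‖_q^{1+κ}] ≤ σ^{1+κ} for some σ > 0, then E[‖ĝ − E[ĝ]‖_q²] ≤ 4σ^{1+κ} c^{1−κ}. -/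
open MeasureTheory
open scoped ENNReal ProbabilityTheory

noncomputable section
open Classical in

theorem statement10 {d : ℕ} (q : ℝ≥0∞) [Fact (1 ≤ q)]
    {Ω : Type*} [MeasureSpace Ω] [IsProbabilityMeasure (ℙ : Measure Ω)]
    (c : ℝ) (hc : 0 < c) (κ : ℝ) (hκ : κ ∈ Set.Ioc (0 : ℝ) 1)
    (σ : ℝ) (hσ : 0 < σ)
    (g : Ω → PiLp q (fun _ : Fin d => ℝ))
    (hgmeas : AEStronglyMeasurable g ℙ)
    (hmomInt : Integrable (fun ω => ‖g ω‖ ^ (1 + κ)))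
    (hmom : ∫ ω, ‖g ω‖ ^ (1 + κ) ≤ σ ^ (1 + κ))
    (ghat : Ω → PiLp q (fun _ : Fin d => ℝ))
    (hghat : ∀ ω, ghat ω = if g ω = 0 then 0 else (min ‖g ω‖ c / ‖g ω‖) • g ω) :
    ∫ ω, ‖ghat ω - ∫ ω', ghat ω'‖ ^ 2 ≤ 4 * σ ^ (1 + κ) * c ^ (1 - κ) := by
  obtain ⟨hκ0, hκ1⟩ := hκ
  -- ghat with no case split
  have hghat' : ∀ ω, ghat ω = (min ‖g ω‖ c / ‖g ω‖) • g ω := by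
    intro ω
    rw [hghat ω]
    split_ifs with h
    · simp [h]
    · rfl
  -- norm formula
  have hnorm : ∀ ω, ‖ghat ω‖ = min ‖g ω‖ c := by
    intro ω
    rw [hghat ω]
    split_ifs with h
    · simp [h, le_of_lt hc]
    · have hg : 0 < ‖g ω‖ := norm_pos_iff.mpr h
      have hmin : 0 ≤ min ‖g ω‖ c := le_min hg.le hc.le
      rw [norm_smul, Real.norm_eq_abs, abs_div, abs_of_nonneg hmin,
        abs_of_pos hg, div_mul_cancel₀ _ hg.ne']
  have hbound : ∀ ω, ‖ghat ω‖ ≤ c := fun ω => by rw [hnorm ω]; exact min_le_right _ _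
  have hnn : ∀ ω, (0:ℝ) ≤ ‖ghat ω‖ := fun ω => norm_nonneg _
  -- measurability
  have hmeas : AEStronglyMeasurable ghat ℙ := by
    have : AEStronglyMeasurable (fun ω => (min ‖g ω‖ c / ‖g ω‖) • g ω) ℙ := by
      exact (((hgmeas.norm.aemeasurable.min aemeasurable_const).div hgmeas.norm.aemeasurable).aestronglyMeasurable).smul hgmeas
    exact this.congr (Filter.Eventually.of_forall fun ω => (hghat' ω).symm)
  have hmem2 : MemLp ghat 2 ℙ := MemLp.of_bound hmeas c (Filter.Eventually.of_forall hbound)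
  have hint : Integrable ghat ℙ := hmem2.integrable one_le_two
  set m := ∫ ω', ghat ω' with hm
  -- pointwise squared bound on ‖ghat‖
  have hsq : ∀ ω, ‖ghat ω‖ ^ 2 ≤ c ^ (1 - κ) * ‖g ω‖ ^ (1 + κ) := by
    intro ω
    rw [hnorm ω]
    set a := min ‖g ω‖ c with ha
    have ha0 : 0 ≤ a := le_min (norm_nonneg _) hc.le
    rcases eq_or_lt_of_le ha0 with h0 | h0
    · rw [← h0]
      simpa using mul_nonneg (Real.rpow_nonneg hc.le _) (Real.rpow_nonneg (norm_nonneg _) _)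
    · have h1 : a ^ 2 = a ^ (1 - κ) * a ^ (1 + κ) := by
        rw [← Real.rpow_add h0]
        norm_num
      rw [h1]
      have h2 : a ^ (1 - κ) ≤ c ^ (1 - κ) :=
        Real.rpow_le_rpow ha0 (min_le_right _ _) (by linarith)
      have h3 : a ^ (1 + κ) ≤ ‖g ω‖ ^ (1 + κ) :=
        Real.rpow_le_rpow ha0 (min_le_left _ _) (by linarith)
      exact mul_le_mul h2 h3 (Real.rpow_nonneg ha0 _) (Real.rpow_nonneg hc.le _)
  have hrpow_nn : ∀ ω, (0:ℝ) ≤ c ^ (1 - κ) * ‖g ω‖ ^ (1 + κ) := fun ω => by positivity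
  -- Jensen via variance
  have hmemX : MemLp (fun ω => ‖ghat ω‖) 2 ℙ := hmem2.norm
  have hintX2 : Integrable (fun ω => ‖ghat ω‖ ^ 2) ℙ := hmemX.integrable_sq
  have hjensen : (∫ ω, ‖ghat ω‖) ^ 2 ≤ ∫ ω, ‖ghat ω‖ ^ 2 := by
    have h := ProbabilityTheory.variance_nonneg (fun ω => ‖ghat ω‖) ℙ
    rw [ProbabilityTheory.variance_eq_sub hmemX] at h
    simpa using h
  have hmle : ‖m‖ ≤ ∫ ω, ‖ghat ω‖ := norm_integral_le_integral_norm _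
  have hm2 : ‖m‖ ^ 2 ≤ ∫ ω, ‖ghat ω‖ ^ 2 :=
    le_trans (by nlinarith [norm_nonneg m]) hjensen
  -- main pointwise bound
  have hptw : ∀ ω, ‖ghat ω - m‖ ^ 2 ≤ 2 * ‖ghat ω‖ ^ 2 + 2 * ‖m‖ ^ 2 := by
    intro ω
    have h := norm_sub_le (ghat ω) m
    have h2 : ‖ghat ω - m‖ ^ 2 ≤ (‖ghat ω‖ + ‖m‖) ^ 2 :=
      pow_le_pow_left₀ (norm_nonneg _) h 2
    nlinarith [sq_nonneg (‖ghat ω‖ - ‖m‖)]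
  -- integrabilities
  have hintL : Integrable (fun ω => ‖ghat ω - m‖ ^ 2) ℙ :=
    ((hmem2.sub (memLp_const m)).norm).integrable_sq
  have hintR : Integrable (fun ω => 2 * ‖ghat ω‖ ^ 2 + 2 * ‖m‖ ^ 2) ℙ :=
    (hintX2.const_mul 2).add (integrable_const _)
  calc ∫ ω, ‖ghat ω - m‖ ^ 2
      ≤ ∫ ω, (2 * ‖ghat ω‖ ^ 2 + 2 * ‖m‖ ^ 2) := integral_mono hintL hintR hptw
    _ = 2 * (∫ ω, ‖ghat ω‖ ^ 2) + 2 * ‖m‖ ^ 2 := by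
        rw [integral_add (hintX2.const_mul 2) (integrable_const _),
          integral_const_mul, integral_const]
        simp
    _ ≤ 4 * ∫ ω, ‖ghat ω‖ ^ 2 := by linarith
    _ ≤ 4 * ∫ ω, c ^ (1 - κ) * ‖g ω‖ ^ (1 + κ) := by
        have := integral_mono hintX2 (hmomInt.const_mul (c ^ (1 - κ))) hsq
        linarith
    _ = 4 * (c ^ (1 - κ) * ∫ ω, ‖g ω‖ ^ (1 + κ)) := by rw [integral_const_mul]
    _ ≤ 4 * σ ^ (1 + κ) * c ^ (1 - κ) := by
        have hcp : (0:ℝ) ≤ c ^ (1 - κ) := Real.rpow_nonneg hc.le _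
        nlinarith
end
end

section
/- Let g be a random vector in ℝ^d, c > 0, q ∈ [1,∞], κ ∈ (0,1], and let ĝ = (min(‖g‖_q, c)/‖g‖_q)·g when g ≠ 0 and ĝ = 0 when g = 0. If E[‖g‖_q^{1+κ}] ≤ σ^{1+κ} for some σ > 0 (in particular g is integrable), then the clipping bias satisfies ‖E[g] − E[ĝ]‖_q ≤ σ^{1+κ}/c^κ. -/
open MeasureTheory
open scoped ENNReal ProbabilityTheory

noncomputable section
open Classical in

theorem statement11 {d : ℕ} (q : ℝ≥0∞) [Fact (1 ≤ q)]
    {Ω : Type*} [MeasureSpace Ω] [IsProbabilityMeasure (ℙ : Measure Ω)]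
    (c : ℝ) (hc : 0 < c) (κ : ℝ) (hκ : κ ∈ Set.Ioc (0 : ℝ) 1)
    (σ : ℝ) (hσ : 0 < σ)
    (g : Ω → PiLp q (fun _ : Fin d => ℝ))
    (hgmeas : AEStronglyMeasurable g ℙ)
    (hgint : Integrable g)
    (hmomInt : Integrable (fun ω => ‖g ω‖ ^ (1 + κ)))
    (hmom : ∫ ω, ‖g ω‖ ^ (1 + κ) ≤ σ ^ (1 + κ))
    (ghat : Ω → PiLp q (fun _ : Fin d => ℝ))
    (hghat : ∀ ω, ghat ω = if g ω = 0 then 0 else (min ‖g ω‖ c / ‖g ω‖) • g ω) :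
    ‖(∫ ω, g ω) - ∫ ω, ghat ω‖ ≤ σ ^ (1 + κ) / c ^ κ := by
  obtain ⟨hκ0, hκ1⟩ := hκ
  -- ghat equals the scaling formula everywhere
  have hform : ∀ ω, ghat ω = (min ‖g ω‖ c / ‖g ω‖) • g ω := by
    intro ω
    rw [hghat ω]
    by_cases h : g ω = 0
    · simp [h]
    · simp [h]
  -- pointwise norm bound ‖ghat ω‖ ≤ ‖g ω‖
  have hnorm_le : ∀ ω, ‖ghat ω‖ ≤ ‖g ω‖ := by
    intro ω
    rw [hform ω, norm_smul]
    by_cases h : g ω = 0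
    · simp [h]
    · have hg0 : 0 < ‖g ω‖ := norm_pos_iff.2 h
      have hratio : min ‖g ω‖ c / ‖g ω‖ ≤ 1 :=
        div_le_one_of_le₀ (min_le_left _ _) hg0.le
      have hratio0 : 0 ≤ min ‖g ω‖ c / ‖g ω‖ :=
        div_nonneg (le_min hg0.le hc.le) hg0.le
      calc ‖min ‖g ω‖ c / ‖g ω‖‖ * ‖g ω‖
          = (min ‖g ω‖ c / ‖g ω‖) * ‖g ω‖ := by rw [Real.norm_of_nonneg hratio0]
        _ ≤ 1 * ‖g ω‖ := by
            exact mul_le_mul_of_nonneg_right hratio hg0.le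
        _ = ‖g ω‖ := one_mul _
  -- measurability of ghat
  have hghat_meas : AEStronglyMeasurable ghat ℙ := by
    have : ghat = fun ω => (min ‖g ω‖ c / ‖g ω‖) • g ω := funext hform
    rw [this]
    have hm : AEMeasurable (fun ω => min ‖g ω‖ c / ‖g ω‖) ℙ :=
      (hgmeas.norm.aemeasurable.min aemeasurable_const).div hgmeas.norm.aemeasurable
    exact hm.aestronglyMeasurable.smul hgmeas
  have hghat_int : Integrable ghat := by
    refine hgint.mono hghat_meas ?_
    filter_upwards with ω using hnorm_le ω
  -- pointwise bound on the difference
  have hkey : ∀ ω, ‖g ω - ghat ω‖ ≤ ‖g ω‖ ^ (1 + κ) / c ^ κ := by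
    intro ω
    have hcκ : (0:ℝ) < c ^ κ := Real.rpow_pos_of_pos hc κ
    by_cases h : g ω = 0
    · rw [hghat ω]
      simp [h]
      positivity
    · have hg0 : 0 < ‖g ω‖ := norm_pos_iff.2 h
      by_cases hle : ‖g ω‖ ≤ c
      · -- no clipping: ghat = g
        have : ghat ω = g ω := by
          rw [hform ω, min_eq_left hle, div_self hg0.ne', one_smul]
        rw [this]
        simp
        positivity
      · push_neg at hle
        have hmin : min ‖g ω‖ c = c := min_eq_right hle.le
        have hdiff : g ω - ghat ω = (1 - c / ‖g ω‖) • g ω := by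
          rw [hform ω, hmin, sub_smul, one_smul]
        have hratio0 : 0 ≤ 1 - c / ‖g ω‖ := by
          have : c / ‖g ω‖ ≤ 1 := div_le_one_of_le₀ hle.le hg0.le
          linarith
        have h1 : ‖g ω - ghat ω‖ = ‖g ω‖ - c := by
          rw [hdiff, norm_smul, Real.norm_of_nonneg hratio0]
          field_simp
        rw [h1]
        have h2 : ‖g ω‖ - c ≤ ‖g ω‖ := by linarith
        have h3 : c ^ κ ≤ ‖g ω‖ ^ κ :=
          Real.rpow_le_rpow hc.le hle.le hκ0.le
        have h4 : ‖g ω‖ ^ (1 + κ) = ‖g ω‖ * ‖g ω‖ ^ κ := by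
          rw [Real.rpow_add hg0, Real.rpow_one]
        calc ‖g ω‖ - c ≤ ‖g ω‖ := h2
          _ = ‖g ω‖ * c ^ κ / c ^ κ := by field_simp
          _ ≤ ‖g ω‖ * ‖g ω‖ ^ κ / c ^ κ := by
              gcongr
          _ = ‖g ω‖ ^ (1 + κ) / c ^ κ := by rw [h4]
  -- put it together
  rw [← integral_sub hgint hghat_int]
  calc ‖∫ ω, (g ω - ghat ω)‖ ≤ ∫ ω, ‖g ω - ghat ω‖ :=
        norm_integral_le_integral_norm _
    _ ≤ ∫ ω, ‖g ω‖ ^ (1 + κ) / c ^ κ := by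
        apply integral_mono ((hgint.sub hghat_int).norm) (hmomInt.div_const _)
        intro ω; exact hkey ω
    _ = (∫ ω, ‖g ω‖ ^ (1 + κ)) / c ^ κ := integral_div _ _
    _ ≤ σ ^ (1 + κ) / c ^ κ := by
        have hcκ : (0:ℝ) < c ^ κ := Real.rpow_pos_of_pos hc κ
        gcongr
end
end
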